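/- With S(3), the partition {A, B, C}, and the linear order τ as above: τ is a dense linear order without endpoints, and each of A, B, C is a dense subset of ⟨S, τ⟩; hence ⟨S, τ, A, B, C⟩ is isomorphic to ℚ partitioned into three dense sets (ℚ₃). -/

import Mathlib

/-- Points of the unit circle with rational angle. -/
def Scirc : Set ℂ := {z | ∃ q : ℚ, z = Complex.exp (q * Complex.I)}

/-- The `S(3)` relation: `e^{q₁i} → e^{q₂i}` iff
`q₂ - q₁ ∈ ⋃_{k∈ℤ} (2kπ, 2kπ + 2π/3)`. -/
def Arrow3 (x y : ℂ) : Prop :=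
  ∃ q₁ q₂ : ℚ, x = Complex.exp (q₁ * Complex.I) ∧ y = Complex.exp (q₂ * Complex.I) ∧
    ∃ k : ℤ, 2 * (k : ℝ) * Real.pi < (q₂ : ℝ) - (q₁ : ℝ) ∧
      (q₂ : ℝ) - (q₁ : ℝ) < 2 * (k : ℝ) * Real.pi + 2 * Real.pi / 3

/-- The incomparability relation of `S(3)`. -/
def Par3 (x y : ℂ) : Prop := x ≠ y ∧ ¬ Arrow3 x y ∧ ¬ Arrow3 y x

/-- The arc of angles in `⋃_k (π/2 + 2kπ, 7π/6 + 2kπ)`. -/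
def ArcA : Set ℂ :=
  {z | ∃ q : ℚ, z = Complex.exp (q * Complex.I) ∧
    ∃ k : ℤ, Real.pi / 2 + 2 * (k : ℝ) * Real.pi < (q : ℝ) ∧
      (q : ℝ) < 7 * Real.pi / 6 + 2 * (k : ℝ) * Real.pi}

/-- The arc of angles in `⋃_k (7π/6 + 2kπ, 11π/6 + 2kπ)`. -/
def ArcB : Set ℂ :=
  {z | ∃ q : ℚ, z = Complex.exp (q * Complex.I) ∧
    ∃ k : ℤ, 7 * Real.pi / 6 + 2 * (k : ℝ) * Real.pi < (q : ℝ) ∧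
      (q : ℝ) < 11 * Real.pi / 6 + 2 * (k : ℝ) * Real.pi}

/-- The arc of angles in `⋃_k (11π/6 + 2kπ, 15π/6 + 2kπ)`. -/
def ArcC : Set ℂ :=
  {z | ∃ q : ℚ, z = Complex.exp (q * Complex.I) ∧
    ∃ k : ℤ, 11 * Real.pi / 6 + 2 * (k : ℝ) * Real.pi < (q : ℝ) ∧
      (q : ℝ) < 15 * Real.pi / 6 + 2 * (k : ℝ) * Real.pi}

/-- The linear order `τ`: `→` within parts, `→⁻¹` on `(A×C) ∪ (C×B) ∪ (B×A)`,
and `∥` on `(C×A) ∪ (B×C) ∪ (A×B)`. -/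
def Tau (x y : ℂ) : Prop :=
  (((x ∈ ArcA ∧ y ∈ ArcA) ∨ (x ∈ ArcB ∧ y ∈ ArcB) ∨ (x ∈ ArcC ∧ y ∈ ArcC)) ∧ Arrow3 x y) ∨
  (((x ∈ ArcA ∧ y ∈ ArcC) ∨ (x ∈ ArcC ∧ y ∈ ArcB) ∨ (x ∈ ArcB ∧ y ∈ ArcA)) ∧ Arrow3 y x) ∨
  (((x ∈ ArcC ∧ y ∈ ArcA) ∨ (x ∈ ArcB ∧ y ∈ ArcC) ∨ (x ∈ ArcA ∧ y ∈ ArcB)) ∧ Par3 x y)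

/-!
Every point of `S` is `e^{qi}` for a unique rational `q`, since `π` is irrational. Write
`q = θ + n · 2π/3` with `θ ∈ (π/2, 7π/6)` (`θ = fold q`, `n = sector q`); the point lies on `A`,
`B` or `C` according to `n mod 3`, and a case check shows that `τ` compares two points exactly by
their folded angles `θ`: rotating `B` and `C` back onto `A` turns `τ` into the order of the reals.
The folded angles of each arc are dense in `(π/2, 7π/6)`, so `⟨S, τ⟩` is a countable dense order
without endpoints in which every arc is dense, and Cantor's back-and-forth theorem identifies it
with `ℚ`.
-/

open Complex Real Set

lemma eq_zero_of_ratCast_eq_mul_pi {q r : ℚ} (h : (q : ℝ) = r * π) : r = 0 := by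
  by_contra hr
  exact (irrational_pi.ratCast_mul hr).ne_rat q h.symm

lemma exp_ratCast_mul_I_injective : Function.Injective fun q : ℚ => exp (q * I) := by
  intro p q h
  obtain ⟨n, hn⟩ := Complex.exp_eq_exp_iff_exists_int.1 h
  have him : ((p - q : ℚ) : ℝ) = ((2 * n : ℤ) : ℚ) * π := by
    have : (p : ℝ) = q + n * (2 * π) := by simpa using congrArg Complex.im hn
    push_cast; linarith
  have hn0 : n = 0 := by simpa using eq_zero_of_ratCast_eq_mul_pi him
  simpa [hn0, sub_eq_zero] using him

lemma two_pi_div_three_pos : 0 < 2 * π / 3 := by positivity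

noncomputable def sector (t : ℝ) : ℤ := toIocDiv two_pi_div_three_pos (π / 2) t

noncomputable def fold (t : ℝ) : ℝ := toIocMod two_pi_div_three_pos (π / 2) t

lemma fold_add_sector_mul (t : ℝ) : fold t + sector t * (2 * π / 3) = t := by
  have := toIocMod_add_toIocDiv_zsmul two_pi_div_three_pos (π / 2) t
  rwa [zsmul_eq_mul] at this

lemma sector_eq_iff {t : ℝ} {n : ℤ} :
    sector t = n ↔ π / 2 < t - n * (2 * π / 3) ∧ t - n * (2 * π / 3) ≤ 7 * π / 6 := by
  rw [sector, toIocDiv_eq_iff, zsmul_eq_mul, mem_Ioc]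
  ring_nf

lemma fold_mem_Ioo (q : ℚ) : fold q ∈ Ioo (π / 2) (7 * π / 6) := by
  obtain ⟨h₁, h₂⟩ := sector_eq_iff.1 (rfl : sector q = sector q)
  have hq := fold_add_sector_mul q
  refine ⟨by linarith, lt_of_le_of_ne (by linarith) fun h => ?_⟩
  have h0 := eq_zero_of_ratCast_eq_mul_pi (q := q) (r := (7 + 4 * sector q) / 6)
    (by push_cast; linarith)
  field_simp at h0
  norm_cast at h0
  omega

lemma fold_injective : Function.Injective fun q : ℚ => fold q := by
  intro p q h
  have hp := fold_add_sector_mul p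
  have hq := fold_add_sector_mul q
  have h0 := eq_zero_of_ratCast_eq_mul_pi (q := p - q) (r := 2 * (sector p - sector q) / 3)
    (by push_cast; simp only at h; linarith)
  have hs : sector p = sector q := by field_simp at h0; norm_cast at h0; omega
  exact_mod_cast (by simp only at h; rw [← hp, ← hq, h, hs] : (p : ℝ) = q)

def IsArrowAngle (t : ℝ) : Prop := ∃ k : ℤ, 2 * k * π < t ∧ t < 2 * k * π + 2 * π / 3

lemma isArrowAngle_add_int_mul_two_pi (t : ℝ) (m : ℤ) :
    IsArrowAngle (t + m * (2 * π)) ↔ IsArrowAngle t := by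
  constructor
  · rintro ⟨k, h₁, h₂⟩
    exact ⟨k - m, by push_cast; constructor <;> linarith⟩
  · rintro ⟨k, h₁, h₂⟩
    exact ⟨k + m, by push_cast; constructor <;> linarith⟩

lemma isArrowAngle_iff_of_mem {t : ℝ} (h₁ : -(4 * π / 3) ≤ t) (h₂ : t ≤ 2 * π) :
    IsArrowAngle t ↔ 0 < t ∧ t < 2 * π / 3 := by
  refine ⟨fun ⟨k, hk₁, hk₂⟩ => ?_, fun h => ⟨0, by simpa using h⟩⟩
  have hlt : k < 1 := by exact_mod_cast (by nlinarith [pi_pos] : (k : ℝ) < 1)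
  have hgt : -1 < k := by exact_mod_cast (by nlinarith [pi_pos] : (-1 : ℝ) < k)
  obtain rfl : k = 0 := by omega
  simpa using And.intro hk₁ hk₂

lemma arrow3_exp_iff (p q : ℚ) :
    Arrow3 (exp (p * I)) (exp (q * I)) ↔ IsArrowAngle (q - p) := by
  constructor
  · rintro ⟨p', q', hp, hq, hk⟩
    rw [exp_ratCast_mul_I_injective hp, exp_ratCast_mul_I_injective hq]
    exact hk
  · exact fun h => ⟨p, q, rfl, rfl, h⟩

lemma isArrowAngle_sub_iff (p q : ℚ) :
    IsArrowAngle (q - p) ↔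
      IsArrowAngle (fold q - fold p + ((sector q - sector p) % 3 : ℤ) * (2 * π / 3)) := by
  have h : ((sector q - sector p : ℤ) : ℝ) =
      ((sector q - sector p) % 3 : ℤ) + ((sector q - sector p) / 3 : ℤ) * 3 := by
    exact_mod_cast (Int.emod_add_ediv_mul _ 3).symm
  push_cast at h
  rw [← isArrowAngle_add_int_mul_two_pi (fold q - fold p + _) ((sector q - sector p) / 3)]
  congr! 1
  linear_combination (fold_add_sector_mul p) - (fold_add_sector_mul q) + h * (2 * π / 3)

lemma exp_mem_setOf_iff {P : ℚ → Prop} (q : ℚ) :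
    exp (q * I) ∈ {z | ∃ q' : ℚ, z = exp (q' * I) ∧ P q'} ↔ P q :=
  ⟨fun ⟨_, h, hP⟩ => exp_ratCast_mul_I_injective h ▸ hP, fun hP => ⟨q, rfl, hP⟩⟩

lemma exists_int_bounds_iff_sector_emod (q : ℚ) {j : ℤ} (hj₀ : 0 ≤ j) (hj₃ : j < 3) :
    (∃ k : ℤ, π / 2 + (3 * k + j) * (2 * π / 3) < q ∧ q < 7 * π / 6 + (3 * k + j) * (2 * π / 3))
      ↔ sector q % 3 = j := by
  have hq := fold_add_sector_mul q
  have hfold := fold_mem_Ioo q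
  constructor
  · rintro ⟨k, h₁, h₂⟩
    have : sector q = 3 * k + j := sector_eq_iff.2 (by push_cast; constructor <;> linarith)
    omega
  · intro h
    refine ⟨sector q / 3, ?_⟩
    have : ((3 * (sector q / 3) + j : ℤ) : ℝ) = sector q := by exact_mod_cast (by omega)
    push_cast at this
    rw [this]
    constructor <;> linarith [hfold.1, hfold.2]

lemma exp_mem_arc_iff (q : ℚ) {j : ℤ} (hj₀ : 0 ≤ j) (hj₃ : j < 3) {a b : ℝ}
    (ha : a = π / 2 + j * (2 * π / 3)) (hb : b = a + 2 * π / 3) :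
    exp (q * I) ∈ {z | ∃ q' : ℚ, z = exp (q' * I) ∧
      ∃ k : ℤ, a + 2 * (k : ℝ) * π < q' ∧ (q' : ℝ) < b + 2 * k * π} ↔ sector q % 3 = j := by
  rw [exp_mem_setOf_iff, ← exists_int_bounds_iff_sector_emod q hj₀ hj₃]
  refine exists_congr fun k => ?_
  subst ha hb
  constructor <;> rintro ⟨h₁, h₂⟩ <;> constructor <;> linarith

lemma exp_mem_arcA_iff (q : ℚ) : exp (q * I) ∈ ArcA ↔ sector q % 3 = 0 :=
  exp_mem_arc_iff q le_rfl (by norm_num) (by ring) (by ring)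

lemma exp_mem_arcB_iff (q : ℚ) : exp (q * I) ∈ ArcB ↔ sector q % 3 = 1 :=
  exp_mem_arc_iff q (by norm_num) (by norm_num) (by push_cast; ring) (by ring)

lemma exp_mem_arcC_iff (q : ℚ) : exp (q * I) ∈ ArcC ↔ sector q % 3 = 2 :=
  exp_mem_arc_iff q (by norm_num) (by norm_num) (by push_cast; ring) (by ring)

lemma tau_exp_iff (p q : ℚ) :
    Tau (exp (p * I)) (exp (q * I)) ↔
      ((sector q - sector p) % 3 = 0 ∧ Arrow3 (exp (p * I)) (exp (q * I))) ∨
      ((sector q - sector p) % 3 = 1 ∧ Par3 (exp (p * I)) (exp (q * I))) ∨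
      ((sector q - sector p) % 3 = 2 ∧ Arrow3 (exp (q * I)) (exp (p * I))) := by
  simp only [Tau, exp_mem_arcA_iff, exp_mem_arcB_iff, exp_mem_arcC_iff]
  generalize sector p = a, sector q = b
  rcases (by omega : a % 3 = 0 ∨ a % 3 = 1 ∨ a % 3 = 2) with ha | ha | ha <;>
  rcases (by omega : b % 3 = 0 ∨ b % 3 = 1 ∨ b % 3 = 2) with hb | hb | hb <;>
  simp [ha, hb, show (b - a) % 3 = (b % 3 - a % 3) % 3 by omega]

lemma tau_exp_iff_fold_lt (p q : ℚ) : Tau (exp (p * I)) (exp (q * I)) ↔ fold p < fold q := by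
  obtain ⟨hp₁, hp₂⟩ := fold_mem_Ioo p
  obtain ⟨hq₁, hq₂⟩ := fold_mem_Ioo q
  rw [tau_exp_iff, Par3, arrow3_exp_iff, arrow3_exp_iff, isArrowAngle_sub_iff p q,
    isArrowAngle_sub_iff q p, exp_ratCast_mul_I_injective.ne_iff, ← fold_injective.ne_iff]
  rcases (by omega : (sector q - sector p) % 3 = 0 ∨ (sector q - sector p) % 3 = 1 ∨
    (sector q - sector p) % 3 = 2) with h | h | h
  · have h' : (sector p - sector q) % 3 = 0 := by omega
    simp only [h, h', Int.cast_zero, zero_mul, add_zero, true_and, zero_ne_one, false_and,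
      OfNat.zero_ne_ofNat, or_false]
    rw [isArrowAngle_iff_of_mem (by linarith) (by linarith)]
    exact ⟨fun h => by linarith [h.1], fun h => ⟨by linarith, by linarith⟩⟩
  · have h' : (sector p - sector q) % 3 = 2 := by omega
    simp only [h, h', one_ne_zero, Int.cast_one, one_mul, false_and, Int.cast_ofNat, true_and,
      OfNat.one_ne_ofNat, or_false, false_or]
    rw [isArrowAngle_iff_of_mem (by linarith) (by linarith),
      isArrowAngle_iff_of_mem (by linarith) (by linarith)]
    refine ⟨fun ⟨hne, h₁, _⟩ => lt_of_le_of_ne ?_ hne, fun hlt =>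
      ⟨hlt.ne, fun h => by linarith [h.2], fun h => by linarith [h.2]⟩⟩
    by_contra hlt
    exact h₁ ⟨by linarith, by linarith⟩
  · have h' : (sector p - sector q) % 3 = 1 := by omega
    simp only [h, h', OfNat.ofNat_ne_zero, Int.cast_ofNat, false_and, OfNat.ofNat_ne_one,
      true_and, false_or]
    rw [isArrowAngle_iff_of_mem (by linarith) (by linarith)]
    exact ⟨fun h => by linarith [h.2], fun h => ⟨by linarith, by linarith⟩⟩

lemma exists_sector_emod_fold_mem_Ioo {j : ℤ} (hj₀ : 0 ≤ j) (hj₃ : j < 3) {u v : ℝ}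
    (hu : π / 2 ≤ u) (hv : v ≤ 7 * π / 6) (huv : u < v) :
    ∃ q : ℚ, sector q % 3 = j ∧ fold q ∈ Ioo u v := by
  obtain ⟨q, h₁, h₂⟩ := exists_rat_btwn (add_lt_add_left huv (j * (2 * π / 3)))
  have hs : sector q = j := sector_eq_iff.2 ⟨by linarith, by linarith⟩
  have hq := fold_add_sector_mul q
  rw [hs] at hq
  exact ⟨q, by omega, by linarith, by linarith⟩

lemma exists_fold_mem_Ioo {u v : ℝ} (hu : π / 2 ≤ u) (hv : v ≤ 7 * π / 6) (huv : u < v) :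
    ∃ q : ℚ, fold q ∈ Ioo u v :=
  (exists_sector_emod_fold_mem_Ioo le_rfl (by norm_num) hu hv huv).imp fun _ => And.right

lemma exists_tau_between_of_mem_iff {P : Set ℂ} {j : ℤ} (hj₀ : 0 ≤ j) (hj₃ : j < 3)
    (hP : ∀ q : ℚ, exp (q * I) ∈ P ↔ sector q % 3 = j) :
    ∀ x ∈ Scirc, ∀ y ∈ Scirc, Tau x y → ∃ z ∈ P, Tau x z ∧ Tau z y := by
  rintro _ ⟨p, rfl⟩ _ ⟨q, rfl⟩ h
  rw [tau_exp_iff_fold_lt] at h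
  obtain ⟨r, hr, h₁, h₂⟩ :=
    exists_sector_emod_fold_mem_Ioo hj₀ hj₃ (fold_mem_Ioo p).1.le (fold_mem_Ioo q).2.le h
  exact ⟨_, (hP r).2 hr, (tau_exp_iff_fold_lt _ _).2 h₁, (tau_exp_iff_fold_lt _ _).2 h₂⟩

lemma exists_tau_gt_and_lt {x : ℂ} (hx : x ∈ Scirc) :
    (∃ y ∈ Scirc, Tau x y) ∧ (∃ y ∈ Scirc, Tau y x) := by
  obtain ⟨p, rfl⟩ := hx
  obtain ⟨hp₁, hp₂⟩ := fold_mem_Ioo p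
  obtain ⟨q, hq, -⟩ := exists_fold_mem_Ioo hp₁.le le_rfl hp₂
  obtain ⟨r, -, hr⟩ := exists_fold_mem_Ioo le_rfl hp₂.le hp₁
  exact ⟨⟨_, ⟨q, rfl⟩, (tau_exp_iff_fold_lt _ _).2 hq⟩,
    ⟨_, ⟨r, rfl⟩, (tau_exp_iff_fold_lt _ _).2 hr⟩⟩

lemma exists_bijective_rat_lt_iff {α β : Type*} [Countable α] [Nonempty α] [LinearOrder β]
    {g : α → β} (hg : Function.Injective g)
    (hdense : ∀ a b, g a < g b → ∃ c, g a < g c ∧ g c < g b)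
    (hmax : ∀ a, ∃ b, g a < g b) (hmin : ∀ a, ∃ b, g b < g a) :
    ∃ φ : α → ℚ, Function.Bijective φ ∧ ∀ a b, g a < g b ↔ φ a < φ b := by
  have := (countable_range g).to_subtype
  have : DenselyOrdered (range g) := ⟨by
    rintro ⟨_, a, rfl⟩ ⟨_, b, rfl⟩ h
    obtain ⟨c, hc⟩ := hdense a b h
    exact ⟨⟨g c, c, rfl⟩, hc⟩⟩
  have : NoMaxOrder (range g) := ⟨by
    rintro ⟨_, a, rfl⟩
    obtain ⟨b, hb⟩ := hmax a
    exact ⟨⟨g b, b, rfl⟩, hb⟩⟩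
  have : NoMinOrder (range g) := ⟨by
    rintro ⟨_, a, rfl⟩
    obtain ⟨b, hb⟩ := hmin a
    exact ⟨⟨g b, b, rfl⟩, hb⟩⟩
  obtain ⟨e⟩ := Order.iso_of_countable_dense (range g) ℚ
  refine ⟨e ∘ rangeFactorization g,
    e.bijective.comp (rangeFactorization_bijective.2 hg), fun a b => ?_⟩
  rw [Function.comp_apply, Function.comp_apply, e.lt_iff_lt]
  rfl

lemma exists_bijOn_rat_tau_iff :
    ∃ f : ℂ → ℚ, BijOn f Scirc univ ∧ ∀ x ∈ Scirc, ∀ y ∈ Scirc, Tau x y ↔ f x < f y := by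
  obtain ⟨φ, hφ, hφlt⟩ := exists_bijective_rat_lt_iff fold_injective
    (fun p q h => exists_fold_mem_Ioo (fold_mem_Ioo p).1.le (fold_mem_Ioo q).2.le h)
    (fun p => (exists_fold_mem_Ioo (fold_mem_Ioo p).1.le le_rfl (fold_mem_Ioo p).2).imp
      fun _ => And.left)
    (fun p => (exists_fold_mem_Ioo le_rfl (fold_mem_Ioo p).2.le (fold_mem_Ioo p).1).imp
      fun _ => And.right)
  have hinv := Function.leftInverse_invFun exp_ratCast_mul_I_injective
  refine ⟨φ ∘ Function.invFun (fun q : ℚ => exp (q * I)), ⟨fun _ _ => trivial, ?_, ?_⟩, ?_⟩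
  · rintro _ ⟨p, rfl⟩ _ ⟨q, rfl⟩ h
    simp only [Function.comp_apply, hinv p, hinv q] at h
    rw [hφ.1 h]
  · intro r _
    obtain ⟨q, rfl⟩ := hφ.2 r
    exact ⟨_, ⟨q, rfl⟩, by simp only [Function.comp_apply, hinv q]⟩
  · rintro _ ⟨p, rfl⟩ _ ⟨q, rfl⟩
    simp only [Function.comp_apply, hinv p, hinv q]
    exact (tau_exp_iff_fold_lt p q).trans (hφlt p q)

lemma exists_mem_between_of_tau_iff {f : ℂ → ℚ} {P : Set ℂ} (hf : SurjOn f Scirc univ)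
    (hτf : ∀ x ∈ Scirc, ∀ y ∈ Scirc, Tau x y ↔ f x < f y) (hPS : P ⊆ Scirc)
    (hP : ∀ x ∈ Scirc, ∀ y ∈ Scirc, Tau x y → ∃ z ∈ P, Tau x z ∧ Tau z y) (p q : ℚ)
    (hpq : p < q) : ∃ z ∈ P, p < f z ∧ f z < q := by
  obtain ⟨x, hx, rfl⟩ := hf (mem_univ p)
  obtain ⟨y, hy, rfl⟩ := hf (mem_univ q)
  obtain ⟨z, hz, h₁, h₂⟩ := hP x hx y hy ((hτf x hx y hy).2 hpq)
  exact ⟨z, hz, (hτf x hx z (hPS hz)).1 h₁, (hτf z (hPS hz) y hy).1 h₂⟩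

lemma setOf_exp_subset_Scirc (P : ℚ → Prop) : {z | ∃ q : ℚ, z = exp (q * I) ∧ P q} ⊆ Scirc :=
  fun _ ⟨q, h, _⟩ => ⟨q, h⟩

/-- `τ` is a dense linear order on `S` without endpoints, each of
`A`, `B`, `C` is dense in `⟨S, τ⟩`; hence `⟨S, τ, A, B, C⟩` is isomorphic to
`ℚ` partitioned into three dense sets. -/
theorem tau_DLO_three_dense_parts :
    (∀ x ∈ Scirc, ∀ y ∈ Scirc, Tau x y → ∃ z ∈ Scirc, Tau x z ∧ Tau z y) ∧
    (∀ x ∈ Scirc, (∃ y ∈ Scirc, Tau x y) ∧ (∃ y ∈ Scirc, Tau y x)) ∧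
    (∀ x ∈ Scirc, ∀ y ∈ Scirc, Tau x y → ∃ z ∈ ArcA, Tau x z ∧ Tau z y) ∧
    (∀ x ∈ Scirc, ∀ y ∈ Scirc, Tau x y → ∃ z ∈ ArcB, Tau x z ∧ Tau z y) ∧
    (∀ x ∈ Scirc, ∀ y ∈ Scirc, Tau x y → ∃ z ∈ ArcC, Tau x z ∧ Tau z y) ∧
    (∃ f : ℂ → ℚ, Set.BijOn f Scirc Set.univ ∧
      (∀ x ∈ Scirc, ∀ y ∈ Scirc, (Tau x y ↔ f x < f y)) ∧
      (∀ p q : ℚ, p < q → ∃ a ∈ ArcA, p < f a ∧ f a < q) ∧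
      (∀ p q : ℚ, p < q → ∃ b ∈ ArcB, p < f b ∧ f b < q) ∧
      (∀ p q : ℚ, p < q → ∃ c ∈ ArcC, p < f c ∧ f c < q)) := by
  have hA := exists_tau_between_of_mem_iff le_rfl (by norm_num) exp_mem_arcA_iff
  have hB := exists_tau_between_of_mem_iff (by norm_num) (by norm_num) exp_mem_arcB_iff
  have hC := exists_tau_between_of_mem_iff (by norm_num) (by norm_num) exp_mem_arcC_iff
  have hAS : ArcA ⊆ Scirc := setOf_exp_subset_Scirc _
  have hBS : ArcB ⊆ Scirc := setOf_exp_subset_Scirc _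
  have hCS : ArcC ⊆ Scirc := setOf_exp_subset_Scirc _
  obtain ⟨f, hf, hτf⟩ := exists_bijOn_rat_tau_iff
  refine ⟨fun x hx y hy h => ?_, fun x hx => exists_tau_gt_and_lt hx, hA, hB, hC, f, hf, hτf,
    exists_mem_between_of_tau_iff hf.surjOn hτf hAS hA,
    exists_mem_between_of_tau_iff hf.surjOn hτf hBS hB,
    exists_mem_between_of_tau_iff hf.surjOn hτf hCS hC⟩
  obtain ⟨z, hz, h⟩ := hA x hx y hy h
  exact ⟨z, hAS hz, h⟩
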